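/- arXiv:2208.13014 — 3 statements merged into one kernel-verified Lean document; each statement's English description precedes it below -/
import Mathlib

section
/- Let H be a graph on n vertices and k a positive integer. The polytope of stable sets of cardinality exactly k in H equals the intersection of the polytope of stable sets of cardinality at least k and the polytope of stable sets of cardinality at most k. Formally, conv{χ^S : S stable in H, |S| = k} = conv{χ^S : S stable, |S| ≥ k} ∩ conv{χ^S : S stable, |S| ≤ k}. -/
open Finset

/-- A stable (independent) set of vertices in a simple graph. -/
def IsStableSet {n : ℕ} (H : SimpleGraph (Fin n)) (S : Finset (Fin n)) : Prop :=
  ∀ u ∈ S, ∀ v ∈ S, ¬ H.Adj u v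

/-- Incidence (characteristic) vector of a vertex subset. -/
def chiVec {n : ℕ} (S : Finset (Fin n)) : Fin n → ℝ :=
  fun i => if i ∈ S then 1 else 0

/-- The fixed cardinality stable set polytope: convex hull of incidence
vectors of stable sets of cardinality exactly `k`. -/
def stabPolyEq {n : ℕ} (H : SimpleGraph (Fin n)) (k : ℕ) : Set (Fin n → ℝ) :=
  convexHull ℝ {x | ∃ S : Finset (Fin n), IsStableSet H S ∧ S.card = k ∧ x = chiVec S}

/-- Convex hull of incidence vectors of stable sets of cardinality at least `k`. -/
def stabPolyGe {n : ℕ} (H : SimpleGraph (Fin n)) (k : ℕ) : Set (Fin n → ℝ) :=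
  convexHull ℝ {x | ∃ S : Finset (Fin n), IsStableSet H S ∧ k ≤ S.card ∧ x = chiVec S}

/-- Convex hull of incidence vectors of stable sets of cardinality at most `k`. -/
def stabPolyLe {n : ℕ} (H : SimpleGraph (Fin n)) (k : ℕ) : Set (Fin n → ℝ) :=
  convexHull ℝ {x | ∃ S : Finset (Fin n), IsStableSet H S ∧ S.card ≤ k ∧ x = chiVec S}

lemma sum_chiVec {n : ℕ} (S : Finset (Fin n)) : ∑ i, chiVec S i = (S.card : ℝ) := by
  simp [chiVec]

lemma isLinearMap_coordSum {n : ℕ} : IsLinearMap ℝ (fun x : Fin n → ℝ => ∑ i, x i) :=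
  ⟨fun x y => by simp [Finset.sum_add_distrib], fun c x => by simp [Finset.mul_sum]⟩

lemma sum_le_of_mem_Le {n : ℕ} {H : SimpleGraph (Fin n)} {k : ℕ} {x : Fin n → ℝ}
    (hx : x ∈ stabPolyLe H k) : ∑ i, x i ≤ (k : ℝ) := by
  have : stabPolyLe H k ⊆ {x : Fin n → ℝ | ∑ i, x i ≤ (k : ℝ)} := by
    apply convexHull_min _ (convex_halfSpace_le isLinearMap_coordSum (k : ℝ))
    rintro y ⟨S, -, hcard, rfl⟩
    simp only [Set.mem_setOf_eq, sum_chiVec]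
    exact_mod_cast hcard
  exact this hx

lemma sum_ge_of_mem_Ge {n : ℕ} {H : SimpleGraph (Fin n)} {k : ℕ} {x : Fin n → ℝ}
    (hx : x ∈ stabPolyGe H k) : (k : ℝ) ≤ ∑ i, x i := by
  have : stabPolyGe H k ⊆ {x : Fin n → ℝ | (k : ℝ) ≤ ∑ i, x i} := by
    apply convexHull_min _ (convex_halfSpace_ge isLinearMap_coordSum (k : ℝ))
    rintro y ⟨S, -, hcard, rfl⟩
    simp only [Set.mem_setOf_eq, sum_chiVec]
    exact_mod_cast hcard
  exact this hx

theorem stmt0 {n : ℕ} (H : SimpleGraph (Fin n)) (k : ℕ) (hk : 0 < k) :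
    stabPolyEq H k = stabPolyGe H k ∩ stabPolyLe H k := by
  apply Set.Subset.antisymm
  · apply Set.subset_inter
    · exact convexHull_mono (by rintro y ⟨S, hS, hc, rfl⟩; exact ⟨S, hS, hc.ge, rfl⟩)
    · exact convexHull_mono (by rintro y ⟨S, hS, hc, rfl⟩; exact ⟨S, hS, hc.le, rfl⟩)
  · rintro x ⟨hge, hle⟩
    have hsum : ∑ i, x i = (k : ℝ) := le_antisymm (sum_le_of_mem_Le hle) (sum_ge_of_mem_Ge hge)
    rw [stabPolyGe, _root_.convexHull_eq] at hge
    obtain ⟨ι, t, w, z, hw0, hw1, hz, hx⟩ := hge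
    -- c i = coordinate sum of z i
    set c : ι → ℝ := fun i => ∑ j, z i j with hc
    have hck : ∀ i ∈ t, (k : ℝ) ≤ c i := by
      intro i hi
      obtain ⟨S, -, hcard, hzi⟩ := hz i hi
      simp only [hc, hzi, sum_chiVec]
      exact_mod_cast hcard
    have hxsum : ∑ i ∈ t, w i * c i = (k : ℝ) := by
      rw [← hsum]
      have hxe : x = ∑ i ∈ t, w i • z i := by
        rw [← hx, Finset.centerMass_eq_of_sum_1 _ _ hw1]
      rw [hxe]
      simp only [Finset.sum_apply, Pi.smul_apply, smul_eq_mul]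
      rw [Finset.sum_comm]
      simp [hc, Finset.mul_sum]
    have hzero : ∑ i ∈ t, w i * (c i - (k : ℝ)) = 0 := by
      simp only [mul_sub]
      rw [Finset.sum_sub_distrib, hxsum, ← Finset.sum_mul, hw1, one_mul, sub_self]
    have hkey : ∀ i ∈ t, w i ≠ 0 → c i = (k : ℝ) := by
      intro i hi hwi
      have h0 := (Finset.sum_eq_zero_iff_of_nonneg
        (fun j hj => mul_nonneg (hw0 j hj) (sub_nonneg.2 (hck j hj)))).1 hzero i hi
      rcases mul_eq_zero.1 h0 with h | h
      · exact absurd h hwi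
      · linarith [sub_eq_zero.1 h]
    -- restrict to nonzero weights
    rw [stabPolyEq]
    rw [← Finset.centerMass_filter_ne_zero (w := w) (z := z)] at hx
    set t' := t.filter (fun i => w i ≠ 0) with ht'
    rw [← hx]
    apply Finset.centerMass_mem_convexHull
    · intro i hi; exact hw0 i (Finset.mem_filter.1 hi).1
    · rw [ht', Finset.sum_filter_ne_zero, hw1]; exact one_pos
    · intro i hi
      obtain ⟨hit, hwi⟩ := Finset.mem_filter.1 hi
      obtain ⟨S, hstab, hcard, hzi⟩ := hz i hit
      refine ⟨S, hstab, ?_, hzi⟩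
      have : (S.card : ℝ) = (k : ℝ) := by
        rw [← hkey i hit hwi, hc]; simp [hzi, sum_chiVec]
      exact_mod_cast this
end

section
/- Maximal ascent direction when x_e = 0 < 1 = y_e: Let (x^r, y^r) be an optimal solution to the decomposed Lagrangean subproblem z(λ^r) with x^r_e = 0 and y^r_e = 1. Define Δ = min{(λ^r)^T y : y ∈ F_kstab, y_e = 0} − (λ^r)^T y^r and ∂ = min{(w−λ^r)^T x : x ∈ F_sp.tree, x_e = 1} − (w−λ^r)^T x^r (both nonnegative, assuming the restricted minimization sets are nonempty). If m := min{Δ, ∂} > 0, then z(λ^r + m·𝔢_e) > z(λ^r), and (x^r, y^r) remains optimal at λ^r + m·𝔢_e but is not the unique optimal solution there. -/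
open Finset

/-- Spanning-tree-side Lagrangean cost `(w − μ)ᵀ x`. -/
def cTree {m : ℕ} (w μ x : Fin m → ℚ) : ℚ := ∑ i, (w i - μ i) * x i

/-- Stable-set-side Lagrangean cost `μᵀ y`. -/
def cStab {m : ℕ} (μ y : Fin m → ℚ) : ℚ := ∑ i, μ i * y i

/-- The Lagrangean decomposition dual function. -/
def zDual {m : ℕ} (w : Fin m → ℚ) (Fst Fk : Finset (Fin m → ℚ))
    (hFst : Fst.Nonempty) (hFk : Fk.Nonempty) (μ : Fin m → ℚ) : ℚ :=
  Fst.inf' hFst (cTree w μ) + Fk.inf' hFk (cStab μ)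

/-!
Raising `λ_e` by `t` lowers the tree cost of every `x` by `t x_e` and raises the stable-set cost
of every `y` by `t y_e`. Since `x^r_e = 0` and `y^r_e = 1`, the value of `(x^r, y^r)` rises by
exactly `t`; and `x^r` (resp. `y^r`) stays optimal as long as `t` does not exceed the gap `∂`
(resp. `Δ`) to the best competitor that flips coordinate `e`. At `t = min Δ ∂` that competitor
ties, which gives a second optimal pair.
-/

section Perturbation

variable {α : Type*} {s : Finset α} {f q : α → ℚ} {a b : α} {t : ℚ}

theorem Finset.inf'_eq_of_isMinOn (hs : s.Nonempty) (ha : a ∈ s) (hmin : IsMinOn f s a) :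
    s.inf' hs f = f a :=
  le_antisymm (inf'_le f ha) (le_inf' hs f (isMinOn_iff.mp hmin))

theorem IsMinOn.sub_mul_indicator (hmin : IsMinOn f s a) (hq01 : ∀ b ∈ s, q b = 0 ∨ q b = 1)
    (hqa : q a = 0) (hgap : ∀ b ∈ s, q b = 1 → f a + t ≤ f b) :
    IsMinOn (fun b => f b - t * q b) s a := by
  refine isMinOn_iff.mpr fun b hb => ?_
  simp only [hqa, mul_zero, sub_zero]
  rcases hq01 b hb with hqb | hqb
  · simpa [hqb] using isMinOn_iff.mp hmin b hb
  · rw [hqb, mul_one]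
    linarith [hgap b hb hqb]

theorem IsMinOn.of_eq (hmin : IsMinOn f s a) (hb : f b = f a) : IsMinOn f s b :=
  isMinOn_iff.mpr fun c hc => hb ▸ isMinOn_iff.mp hmin c hc

end Perturbation

section Lagrangean

variable {m : ℕ} (w lam : Fin m → ℚ) (e : Fin m) (t : ℚ)

theorem cTree_add_smul_single (x : Fin m → ℚ) :
    cTree w (lam + t • Pi.single e 1) x = cTree w lam x - t * x e := by
  simp only [cTree, Pi.add_apply, Pi.smul_apply, smul_eq_mul, Pi.single_apply, mul_ite,
    mul_one, mul_zero, sub_add_eq_sub_sub, sub_mul, Finset.sum_sub_distrib, ite_mul, zero_mul,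
    Finset.sum_ite_eq', Finset.mem_univ, if_true]

theorem cStab_add_smul_single (y : Fin m → ℚ) :
    cStab (lam + t • Pi.single e 1) y = cStab lam y + t * y e := by
  simp only [cStab, Pi.add_apply, Pi.smul_apply, smul_eq_mul, Pi.single_apply, mul_ite,
    mul_one, mul_zero, add_mul, Finset.sum_add_distrib, ite_mul, zero_mul,
    Finset.sum_ite_eq', Finset.mem_univ, if_true]

variable {w lam e t} {F : Finset (Fin m → ℚ)} {xr yr : Fin m → ℚ}

theorem zDual_eq_of_isMinOn {Fst Fk : Finset (Fin m → ℚ)} (hFst : Fst.Nonempty)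
    (hFk : Fk.Nonempty) (hxr : xr ∈ Fst) (hyr : yr ∈ Fk) (hxmin : IsMinOn (cTree w lam) Fst xr)
    (hymin : IsMinOn (cStab lam) Fk yr) :
    zDual w Fst Fk hFst hFk lam = cTree w lam xr + cStab lam yr := by
  rw [zDual, inf'_eq_of_isMinOn hFst hxr hxmin, inf'_eq_of_isMinOn hFk hyr hymin]

section Tree

variable (h01 : ∀ x ∈ F, x e = 0 ∨ x e = 1) (hmin : IsMinOn (cTree w lam) F xr)
  (hxe : xr e = 0) (hT : (F.filter fun x => x e = 1).Nonempty)
include h01 hmin hxe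

theorem isMinOn_cTree_add_smul_single
    (ht : t ≤ (F.filter fun x => x e = 1).inf' hT (cTree w lam) - cTree w lam xr) :
    IsMinOn (cTree w (lam + t • Pi.single e 1)) F xr := by
  rw [show cTree w (lam + t • Pi.single e 1) = fun x => cTree w lam x - t * x e from
    funext (cTree_add_smul_single w lam e t)]
  refine hmin.sub_mul_indicator h01 hxe fun x hx hxe1 => ?_
  have hinf : (F.filter fun x => x e = 1).inf' hT (cTree w lam) ≤ cTree w lam x :=
    inf'_le _ (mem_filter.2 ⟨hx, hxe1⟩)
  linarith

theorem exists_ne_isMinOn_cTree_add_smul_single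
    (ht : t = (F.filter fun x => x e = 1).inf' hT (cTree w lam) - cTree w lam xr) :
    ∃ x ∈ F, x ≠ xr ∧ IsMinOn (cTree w (lam + t • Pi.single e 1)) F x := by
  obtain ⟨x, hx, hxval⟩ := exists_mem_eq_inf' hT (cTree w lam)
  obtain ⟨hxF, hxe1⟩ := mem_filter.1 hx
  refine ⟨x, hxF, fun h => by simp [h, hxe] at hxe1, ?_⟩
  refine (isMinOn_cTree_add_smul_single h01 hmin hxe hT ht.le).of_eq ?_
  rw [cTree_add_smul_single, cTree_add_smul_single, hxe1, hxe]
  linarith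

end Tree

section Stab

variable (h01 : ∀ y ∈ F, y e = 0 ∨ y e = 1) (hmin : IsMinOn (cStab lam) F yr) (hye : yr e = 1)
  (hK : (F.filter fun y => y e = 0).Nonempty)
include h01 hmin hye

theorem isMinOn_cStab_add_smul_single
    (ht : t ≤ (F.filter fun y => y e = 0).inf' hK (cStab lam) - cStab lam yr) :
    IsMinOn (cStab (lam + t • Pi.single e 1)) F yr := by
  have hq01 : ∀ y ∈ F, 1 - y e = 0 ∨ 1 - y e = 1 := fun y hy => by
    rcases h01 y hy with h | h <;> simp [h]
  have hgap : ∀ y ∈ F, 1 - y e = 1 → cStab lam yr + t ≤ cStab lam y := fun y hy hq => by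
    have hinf : (F.filter fun y => y e = 0).inf' hK (cStab lam) ≤ cStab lam y :=
      inf'_le _ (mem_filter.2 ⟨hy, by linarith⟩)
    linarith
  rw [show cStab (lam + t • Pi.single e 1) = fun y => cStab lam y - t * (1 - y e) + t from
    funext fun y => by rw [cStab_add_smul_single]; ring]
  exact (hmin.sub_mul_indicator hq01 (by simp [hye]) hgap).add isMinOn_const

theorem exists_ne_isMinOn_cStab_add_smul_single
    (ht : t = (F.filter fun y => y e = 0).inf' hK (cStab lam) - cStab lam yr) :
    ∃ y ∈ F, y ≠ yr ∧ IsMinOn (cStab (lam + t • Pi.single e 1)) F y := by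
  obtain ⟨y, hy, hyval⟩ := exists_mem_eq_inf' hK (cStab lam)
  obtain ⟨hyF, hye0⟩ := mem_filter.1 hy
  refine ⟨y, hyF, fun h => by simp [h, hye] at hye0, ?_⟩
  refine (isMinOn_cStab_add_smul_single h01 hmin hye hK ht.le).of_eq ?_
  rw [cStab_add_smul_single, cStab_add_smul_single, hye0, hye]
  linarith

end Stab

end Lagrangean

set_option maxHeartbeats 2000000 in
/-- Maximal ascent direction when `x_e = 0 < 1 = y_e`
(Theorem 4.2 in the INOC version). -/
theorem stmt14 {m : ℕ} (w lam : Fin m → ℚ) (Fst Fk : Finset (Fin m → ℚ))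
    (hFst : Fst.Nonempty) (hFk : Fk.Nonempty)
    (hFst01 : ∀ x ∈ Fst, ∀ i, x i = 0 ∨ x i = 1)
    (hFk01 : ∀ y ∈ Fk, ∀ i, y i = 0 ∨ y i = 1)
    (e : Fin m) (xr yr : Fin m → ℚ) (hxr : xr ∈ Fst) (hyr : yr ∈ Fk)
    (hxopt : ∀ x ∈ Fst, cTree w lam xr ≤ cTree w lam x)
    (hyopt : ∀ y ∈ Fk, cStab lam yr ≤ cStab lam y)
    (hxe : xr e = 0) (hye : yr e = 1)
    (hK : (Fk.filter (fun y => y e = 0)).Nonempty)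
    (hT : (Fst.filter (fun x => x e = 1)).Nonempty)
    (Δ δ : ℚ)
    (hΔ : Δ = (Fk.filter (fun y => y e = 0)).inf' hK (cStab lam) - cStab lam yr)
    (hδ : δ = (Fst.filter (fun x => x e = 1)).inf' hT (cTree w lam) -
      cTree w lam xr)
    (hpos : 0 < min Δ δ)
    (lam' : Fin m → ℚ)
    (hlam' : lam' = lam + min Δ δ • (Pi.single e 1 : Fin m → ℚ)) :
    zDual w Fst Fk hFst hFk lam < zDual w Fst Fk hFst hFk lam' ∧
    (∀ x ∈ Fst, cTree w lam' xr ≤ cTree w lam' x) ∧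
    (∀ y ∈ Fk, cStab lam' yr ≤ cStab lam' y) ∧
    (∃ x' ∈ Fst, ∃ y' ∈ Fk, (x', y') ≠ (xr, yr) ∧
      (∀ x ∈ Fst, cTree w lam' x' ≤ cTree w lam' x) ∧
      (∀ y ∈ Fk, cStab lam' y' ≤ cStab lam' y)) := by
  subst hlam'
  have htree01 : ∀ x ∈ Fst, x e = 0 ∨ x e = 1 := fun x hx => hFst01 x hx e
  have hstab01 : ∀ y ∈ Fk, y e = 0 ∨ y e = 1 := fun y hy => hFk01 y hy e
  have hxopt' := isMinOn_cTree_add_smul_single htree01 hxopt hxe hT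
    ((min_le_right Δ δ).trans hδ.le)
  have hyopt' := isMinOn_cStab_add_smul_single hstab01 hyopt hye hK
    ((min_le_left Δ δ).trans hΔ.le)
  refine ⟨?_, hxopt', hyopt', ?_⟩
  · rw [zDual_eq_of_isMinOn hFst hFk hxr hyr hxopt hyopt,
      zDual_eq_of_isMinOn hFst hFk hxr hyr hxopt' hyopt', cTree_add_smul_single,
      cStab_add_smul_single, hxe, hye]
    linarith
  rcases le_total Δ δ with hle | hle
  · obtain ⟨y', hy', hne, hy'opt⟩ :=
      exists_ne_isMinOn_cStab_add_smul_single hstab01 hyopt hye hK ((min_eq_left hle).trans hΔ)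
    exact ⟨xr, hxr, y', hy', by simp [hne], hxopt', hy'opt⟩
  · obtain ⟨x', hx', hne, hx'opt⟩ :=
      exists_ne_isMinOn_cTree_add_smul_single htree01 hxopt hxe hT ((min_eq_right hle).trans hδ)
    exact ⟨x', hx', yr, hyr, by simp [hne], hx'opt, hyopt'⟩
end

section
/- Maximal ascent direction when x_e = 1 > 0 = y_e: Let (x^r, y^r) be an optimal solution to z(λ^r) with x^r_e = 1 and y^r_e = 0. Define Δ = min{(λ^r)^T y : y ∈ F_kstab, y_e = 1} − (λ^r)^T y^r and ∂ = min{(w−λ^r)^T x : x ∈ F_sp.tree, x_e = 0} − (w−λ^r)^T x^r (both nonnegative, assuming the restricted sets are nonempty). If m := min{Δ, ∂} > 0, then z(λ^r − m·𝔢_e) > z(λ^r), and (x^r, y^r) remains optimal at λ^r − m·𝔢_e but is not the unique optimal solution there. -/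
open Finset

/-!
Lowering `λ_e` by `m = min{Δ, ∂}` raises the tree cost of every `x` with `x_e = 1` by exactly
`m`, and of no other tree; trees avoiding `e` were already at least `∂ ≥ m` more expensive than
`x^r`, so `x^r` stays optimal and the tree minimum rises by `m`. Symmetrically the stable-set cost
drops by `m` exactly on the `y` with `y_e = 1`, which were at least `Δ ≥ m` more expensive than
`y^r`, so `y^r` stays optimal with unchanged value. Hence `z` increases by `m`. Whichever of `Δ`,
`∂` equals `m` supplies a tie: the cheapest restricted kstab, resp. spanning tree, becomes a
second optimum.
-/

lemma Finset.inf'_eq_of_mem_of_forall_le {α β : Type*} [LinearOrder β] {s : Finset α}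
    (hs : s.Nonempty) {f : α → β} {a : α} (ha : a ∈ s) (hmin : ∀ x ∈ s, f a ≤ f x) :
    s.inf' hs f = f a :=
  le_antisymm (inf'_le f ha) (le_inf' hs f hmin)

lemma cTree_sub_smul_single {m : ℕ} (w μ x : Fin m → ℚ) (c : ℚ) (e : Fin m) :
    cTree w (μ - c • Pi.single e 1) x = cTree w μ x + c * x e := by
  simp only [cTree, Pi.sub_apply, Pi.smul_apply, smul_eq_mul, sub_sub_eq_add_sub,
    add_sub_right_comm, add_mul, sum_add_distrib, mul_assoc, ← mul_sum, Pi.single_apply, ite_mul,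
    one_mul, zero_mul, sum_ite_eq', mem_univ, if_true]

lemma cStab_sub_smul_single {m : ℕ} (μ y : Fin m → ℚ) (c : ℚ) (e : Fin m) :
    cStab (μ - c • Pi.single e 1) y = cStab μ y - c * y e := by
  simp only [cStab, Pi.sub_apply, Pi.smul_apply, smul_eq_mul, sub_mul, sum_sub_distrib, mul_assoc,
    ← mul_sum, Pi.single_apply, ite_mul, one_mul, zero_mul, sum_ite_eq', mem_univ, if_true]

section Penalty

variable {ι K : Type*} [Field K] [LinearOrder K] [IsStrictOrderedRing K] {S : Finset (ι → K)}
  {f : (ι → K) → K} {e : ι} {a : ι → K} {c : K}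

lemma add_le_add_mul_of_le_inf'_sub (h01 : ∀ x ∈ S, x e = 0 ∨ x e = 1)
    (hmin : ∀ x ∈ S, f a ≤ f x) (hS : (S.filter (fun x => x e = 0)).Nonempty)
    (hc : c ≤ (S.filter (fun x => x e = 0)).inf' hS f - f a) :
    ∀ x ∈ S, f a + c ≤ f x + c * x e := by
  intro x hx
  rcases h01 x hx with hxe | hxe
  · have := inf'_le f (mem_filter.2 ⟨hx, hxe⟩ : x ∈ S.filter (fun x => x e = 0))
    rw [hxe, mul_zero, add_zero]
    linarith
  · simpa [hxe] using hmin x hx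

lemma le_sub_mul_of_le_inf'_sub (h01 : ∀ x ∈ S, x e = 0 ∨ x e = 1)
    (hmin : ∀ x ∈ S, f a ≤ f x) (hS : (S.filter (fun x => x e = 1)).Nonempty)
    (hc : c ≤ (S.filter (fun x => x e = 1)).inf' hS f - f a) :
    ∀ x ∈ S, f a ≤ f x - c * x e := by
  intro x hx
  rcases h01 x hx with hxe | hxe
  · simpa [hxe] using hmin x hx
  · have := inf'_le f (mem_filter.2 ⟨hx, hxe⟩ : x ∈ S.filter (fun x => x e = 1))
    rw [hxe, mul_one]
    linarith

end Penalty

set_option maxHeartbeats 1000000 in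
/-- Maximal ascent direction when `x_e = 1 > 0 = y_e`
(Theorem 4.3 in the INOC version). -/
theorem stmt15 {m : ℕ} (w lam : Fin m → ℚ) (Fst Fk : Finset (Fin m → ℚ))
    (hFst : Fst.Nonempty) (hFk : Fk.Nonempty)
    (hFst01 : ∀ x ∈ Fst, ∀ i, x i = 0 ∨ x i = 1)
    (hFk01 : ∀ y ∈ Fk, ∀ i, y i = 0 ∨ y i = 1)
    (e : Fin m) (xr yr : Fin m → ℚ) (hxr : xr ∈ Fst) (hyr : yr ∈ Fk)
    (hxopt : ∀ x ∈ Fst, cTree w lam xr ≤ cTree w lam x)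
    (hyopt : ∀ y ∈ Fk, cStab lam yr ≤ cStab lam y)
    (hxe : xr e = 1) (hye : yr e = 0)
    (hK : (Fk.filter (fun y => y e = 1)).Nonempty)
    (hT : (Fst.filter (fun x => x e = 0)).Nonempty)
    (Δ δ : ℚ)
    (hΔ : Δ = (Fk.filter (fun y => y e = 1)).inf' hK (cStab lam) - cStab lam yr)
    (hδ : δ = (Fst.filter (fun x => x e = 0)).inf' hT (cTree w lam) -
      cTree w lam xr)
    (hpos : 0 < min Δ δ)
    (lam' : Fin m → ℚ)
    (hlam' : lam' = lam - min Δ δ • (Pi.single e 1 : Fin m → ℚ)) :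
    zDual w Fst Fk hFst hFk lam < zDual w Fst Fk hFst hFk lam' ∧
    (∀ x ∈ Fst, cTree w lam' xr ≤ cTree w lam' x) ∧
    (∀ y ∈ Fk, cStab lam' yr ≤ cStab lam' y) ∧
    (∃ x' ∈ Fst, ∃ y' ∈ Fk, (x', y') ≠ (xr, yr) ∧
      (∀ x ∈ Fst, cTree w lam' x' ≤ cTree w lam' x) ∧
      (∀ y ∈ Fk, cStab lam' y' ≤ cStab lam' y)) := by
  set M := min Δ δ
  have hct (x : Fin m → ℚ) : cTree w lam' x = cTree w lam x + M * x e := by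
    rw [hlam', cTree_sub_smul_single]
  have hcs (y : Fin m → ℚ) : cStab lam' y = cStab lam y - M * y e := by
    rw [hlam', cStab_sub_smul_single]
  have htree : ∀ x ∈ Fst, cTree w lam xr + M ≤ cTree w lam' x := by
    simpa only [hct] using add_le_add_mul_of_le_inf'_sub (fun x hx => hFst01 x hx e) hxopt hT
      (hδ ▸ min_le_right Δ δ)
  have hstab : ∀ y ∈ Fk, cStab lam yr ≤ cStab lam' y := by
    simpa only [hcs] using le_sub_mul_of_le_inf'_sub (fun y hy => hFk01 y hy e) hyopt hK
      (hΔ ▸ min_le_left Δ δ)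
  have hxr' : cTree w lam' xr = cTree w lam xr + M := by rw [hct, hxe, mul_one]
  have hyr' : cStab lam' yr = cStab lam yr := by rw [hcs, hye, mul_zero, sub_zero]
  have hxopt' : ∀ x ∈ Fst, cTree w lam' xr ≤ cTree w lam' x := hxr' ▸ htree
  have hyopt' : ∀ y ∈ Fk, cStab lam' yr ≤ cStab lam' y := hyr' ▸ hstab
  refine ⟨?_, hxopt', hyopt', ?_⟩
  · simp only [zDual, inf'_eq_of_mem_of_forall_le hFst hxr hxopt,
      inf'_eq_of_mem_of_forall_le hFk hyr hyopt, inf'_eq_of_mem_of_forall_le hFst hxr hxopt',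
      inf'_eq_of_mem_of_forall_le hFk hyr hyopt', hxr', hyr']
    linarith
  obtain hM | hM : M = Δ ∨ M = δ := min_choice Δ δ
  · obtain ⟨y', hy', hy'min⟩ := exists_mem_eq_inf' hK (cStab lam)
    obtain ⟨hy'Fk, hy'e⟩ := mem_filter.1 hy'
    have hy'val : cStab lam' y' = cStab lam' yr := by
      rw [hcs, hyr', hy'e, mul_one]
      linarith
    refine ⟨xr, hxr, y', hy'Fk, fun h => ?_, hxopt', hy'val ▸ hyopt'⟩
    simpa [hy'e, hye] using congrArg (fun p => p.2 e) h
  · obtain ⟨x', hx', hx'min⟩ := exists_mem_eq_inf' hT (cTree w lam)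
    obtain ⟨hx'Fst, hx'e⟩ := mem_filter.1 hx'
    have hx'val : cTree w lam' x' = cTree w lam' xr := by
      rw [hct, hxr', hx'e, mul_zero, add_zero]
      linarith
    refine ⟨x', hx'Fst, yr, hyr, fun h => ?_, hx'val ▸ hxopt', hyopt'⟩
    simpa [hx'e, hxe] using congrArg (fun p => p.1 e) h
end
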